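/- Let A be a symmetric real N×N matrix and b ∈ ℝ^N, and suppose the N×(N+1) block matrix [A b] has rank N. Let H be the (2N+1)×(2N+1) real symmetric matrix with block form H = [[A, 0, b], [0, −A, −b], [bᵀ, −bᵀ, 0]]. Then, counting with multiplicity, H has exactly N negative eigenvalues, exactly N positive eigenvalues, and the eigenvalue 0 with multiplicity exactly one. In particular the index of H is N. -/

import Mathlib

/-!
Swapping the two copies of `ℝ^N` conjugates `H` to `-H`, so the spectrum of `H` is symmetric
about `0`. If `(ξ, η, τ) ∈ ker H`, then `Aξ + τb = Aη + τb = 0` and `bᵀξ = bᵀη`; as `A` is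
symmetric, `ξ - η` is orthogonal to the columns of `[A b]`, which span `ℝ^N`, so `ξ = η`. Hence
`ker H ≅ ker [A b]` is a line, `0` is a simple eigenvalue, and the other `2N` eigenvalues split
evenly between the two signs.
-/

open Matrix Polynomial Module Finset

namespace Matrix

variable {K : Type*} [Field K] {m n : Type*} [Fintype n]

theorem rank_add_finrank_ker_mulVecLin (M : Matrix m n K) :
    M.rank + finrank K (LinearMap.ker M.mulVecLin) = Fintype.card n :=
  M.mulVecLin.finrank_range_add_finrank_ker.trans (finrank_fintype_fun_eq_card K)

theorem vecMul_injective_of_rank_eq_card [Fintype m] {M : Matrix m n K}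
    (h : M.rank = Fintype.card m) :
    Function.Injective M.vecMul :=
  vecMul_injective_iff.mpr <| linearIndependent_iff_card_eq_finrank_span.mpr <| by
    rw [Set.finrank, ← rank_eq_finrank_span_row, h]

end Matrix

theorem Finset.card_filter_lt_add_card_filter_gt_add_card_filter_eq {ι α : Type*} [Fintype ι]
    [LinearOrder α] (f : ι → α) (a : α) :
    #{i | f i < a} + #{i | a < f i} + #{i | f i = a} = Fintype.card ι := by
  rw [card_filter, card_filter, card_filter, ← sum_add_distrib, ← sum_add_distrib, ← card_univ,
    card_eq_sum_ones]
  refine sum_congr rfl fun i _ => ?_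
  rcases lt_trichotomy (f i) a with h | h | h
  · simp [h, h.ne, h.not_gt]
  · simp [h]
  · simp [h, h.ne', h.not_gt]

namespace Matrix.IsHermitian

variable {𝕜 n : Type*} [RCLike 𝕜] [Fintype n] [DecidableEq n] {H : Matrix n n 𝕜}
  (hH : H.IsHermitian)

theorem card_eigenvalues_eq_zero :
    #{i | hH.eigenvalues i = 0} = finrank 𝕜 (LinearMap.ker H.mulVecLin) := by
  have hrank := H.rank_add_finrank_ker_mulVecLin
  rw [hH.rank_eq_card_non_zero_eigs, Fintype.card_subtype] at hrank
  simp only [ne_eq] at hrank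
  have := card_filter_add_card_filter_not (s := univ) (fun i => hH.eigenvalues i = 0)
  rw [card_univ] at this
  omega

theorem roots_charpoly_neg :
    (-H).charpoly.roots = univ.val.map fun i => -(hH.eigenvalues i : 𝕜) := by
  rw [← cfc_neg_id (R := ℝ) H, hH.charpoly_cfc_eq, roots_prod]
  · simp
  · simp [prod_ne_zero_iff, X_add_C_ne_zero]

theorem card_eigenvalues_neg_eq_card_pos (h : (-H).charpoly = H.charpoly) :
    #{i | hH.eigenvalues i < 0} = #{i | 0 < hH.eigenvalues i} := by
  have hroots := hH.roots_charpoly_neg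
  rw [h, hH.roots_charpoly_eq_eigenvalues] at hroots
  simpa [Multiset.countP_map, Finset.card_def] using
    congrArg (Multiset.countP fun x : 𝕜 => RCLike.re x < 0) hroots

end Matrix.IsHermitian

section CommRing

variable {R ι : Type*} [CommRing R] (A : Matrix ι ι R) (b : ι → R)

def differenceHessian : Matrix (ι ⊕ ι ⊕ Unit) (ι ⊕ ι ⊕ Unit) R :=
  of fun i j =>
    match i, j with
    | .inl i, .inl j => A i j
    | .inl _, .inr (.inl _) => 0
    | .inl i, .inr (.inr _) => b i
    | .inr (.inl _), .inl _ => 0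
    | .inr (.inl i), .inr (.inl j) => -A i j
    | .inr (.inl i), .inr (.inr _) => -b i
    | .inr (.inr _), .inl j => b j
    | .inr (.inr _), .inr (.inl j) => -b j
    | .inr (.inr _), .inr (.inr _) => 0

def swapSummands : ι ⊕ ι ⊕ Unit ≃ ι ⊕ ι ⊕ Unit :=
  (Equiv.sumAssoc ι ι Unit).symm.trans
    (((Equiv.sumComm ι ι).sumCongr (Equiv.refl Unit)).trans (Equiv.sumAssoc ι ι Unit))

theorem reindex_swapSummands_differenceHessian :
    reindex swapSummands swapSummands (differenceHessian A b) = -differenceHessian A b := by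
  ext (i | i | u) (j | j | v) <;> simp [swapSummands, differenceHessian]

variable [Fintype ι] (v : ι ⊕ ι ⊕ Unit → R)

@[simp]
theorem differenceHessian_mulVec_inl (i : ι) :
    (differenceHessian A b *ᵥ v) (.inl i) = (A *ᵥ (v ∘ .inl)) i + b i * v (.inr (.inr ())) := by
  simp [differenceHessian, mulVec, dotProduct, Fintype.sum_sum_type]

@[simp]
theorem differenceHessian_mulVec_inr_inl (i : ι) :
    (differenceHessian A b *ᵥ v) (.inr (.inl i)) =
      -((A *ᵥ (v ∘ .inr ∘ .inl)) i + b i * v (.inr (.inr ()))) := by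
  simp [differenceHessian, mulVec, dotProduct, Fintype.sum_sum_type, add_comm]

@[simp]
theorem differenceHessian_mulVec_inr_inr (u : Unit) :
    (differenceHessian A b *ᵥ v) (.inr (.inr u)) = b ⬝ᵥ (v ∘ .inl) - b ⬝ᵥ (v ∘ .inr ∘ .inl) := by
  simp [differenceHessian, mulVec, dotProduct, Fintype.sum_sum_type, sub_eq_add_neg]

end CommRing

section Field

variable {K ι : Type*} [Field K] [Fintype ι] {A : Matrix ι ι K} {b : ι → K}

theorem fromCols_replicateCol_mulVec_apply (w : ι ⊕ Unit → K) (i : ι) :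
    (fromCols A (replicateCol Unit b) *ᵥ w) i = (A *ᵥ (w ∘ .inl)) i + b i * w (.inr ()) := by
  simp [mulVec, dotProduct]

-- `funLeft K K (Sum.elim Sum.inl id)` is the embedding `(ξ, τ) ↦ (ξ, ξ, τ)`.
theorem ker_differenceHessian (hA : Aᵀ = A)
    (hM : Function.Injective (fromCols A (replicateCol Unit b)).vecMul) :
    LinearMap.ker (differenceHessian A b).mulVecLin =
      (LinearMap.ker (fromCols A (replicateCol Unit b)).mulVecLin).map
        (LinearMap.funLeft K K (Sum.elim Sum.inl id)) := by
  ext v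
  simp only [LinearMap.mem_ker, Submodule.mem_map, mulVecLin_apply]
  constructor
  · intro hv
    have h₁ (i : ι) : (A *ᵥ (v ∘ .inl)) i + b i * v (.inr (.inr ())) = 0 := by
      simpa only [differenceHessian_mulVec_inl, Pi.zero_apply] using congrFun hv (.inl i)
    have h₂ (i : ι) : (A *ᵥ (v ∘ .inr ∘ .inl)) i + b i * v (.inr (.inr ())) = 0 := by
      simpa only [differenceHessian_mulVec_inr_inl, Pi.zero_apply, neg_eq_zero] using
        congrFun hv (.inr (.inl i))
    have h₃ : b ⬝ᵥ (v ∘ .inl) - b ⬝ᵥ (v ∘ .inr ∘ .inl) = 0 := by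
      simpa only [differenceHessian_mulVec_inr_inr, Pi.zero_apply] using
        congrFun hv (.inr (.inr ()))
    have hξη : v ∘ .inl = v ∘ .inr ∘ .inl := by
      refine sub_eq_zero.mp (hM ?_)
      ext (i | u)
      · simp only [vecMul_fromCols, Sum.elim_inl, zero_vecMul, Pi.zero_apply]
        rw [← hA, vecMul_transpose, mulVec_sub, Pi.sub_apply]
        linear_combination h₁ i - h₂ i
      · simpa [mulVec_replicateCol_eq_const, dotProduct_comm, dotProduct_sub] using h₃
    refine ⟨v ∘ .inr, ?_, ?_⟩
    · ext i
      rw [fromCols_replicateCol_mulVec_apply]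
      exact h₂ i
    · ext (i | i | u)
      · exact (congrFun hξη i).symm
      · rfl
      · rfl
  · rintro ⟨w, hw, rfl⟩
    have hw' (i : ι) : (A *ᵥ (w ∘ .inl)) i + b i * w (.inr ()) = 0 := by
      rw [← fromCols_replicateCol_mulVec_apply, hw, Pi.zero_apply]
    ext (i | i | u)
    · exact (differenceHessian_mulVec_inl ..).trans (hw' i)
    · exact (differenceHessian_mulVec_inr_inl ..).trans (neg_eq_zero.mpr (hw' i))
    · exact (differenceHessian_mulVec_inr_inr ..).trans (sub_self _)

theorem finrank_ker_differenceHessian (hA : Aᵀ = A)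
    (hrank : (fromCols A (replicateCol Unit b)).rank = Fintype.card ι) :
    finrank K (LinearMap.ker (differenceHessian A b).mulVecLin) = 1 := by
  have hfold : Function.Injective
      (LinearMap.funLeft K K (Sum.elim Sum.inl id : ι ⊕ ι ⊕ Unit → _)) :=
    LinearMap.funLeft_injective_of_surjective _ _ _ fun x => ⟨.inr x, rfl⟩
  have := (fromCols A (replicateCol Unit b)).rank_add_finrank_ker_mulVecLin
  rw [ker_differenceHessian hA (vecMul_injective_of_rank_eq_card hrank),
    ← (Submodule.equivMapOfInjective _ hfold _).finrank_eq]
  simp only [Fintype.card_sum, Fintype.card_unit] at this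
  omega

end Field

/-- Lemma 6.1: the Hessian block matrix `H = [[A, 0, b], [0, -A, -b], [bᵀ, -bᵀ, 0]]`,
for `A` symmetric with `[A b]` of full rank `N`, has exactly `N` negative
eigenvalues, exactly `N` positive eigenvalues and the eigenvalue `0` with
multiplicity one; in particular its index is `N`. -/
theorem stmt_6 {N : ℕ} (A : Matrix (Fin N) (Fin N) ℝ) (hA : Aᵀ = A) (b : Fin N → ℝ)
    (hrank : (Matrix.fromCols A (Matrix.replicateCol Unit b)).rank = N)
    (H : Matrix (Fin N ⊕ Fin N ⊕ Unit) (Fin N ⊕ Fin N ⊕ Unit) ℝ)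
    (hHdef : ∀ i j, H i j =
      match i, j with
      | Sum.inl i, Sum.inl j => A i j
      | Sum.inl _, Sum.inr (Sum.inl _) => 0
      | Sum.inl i, Sum.inr (Sum.inr _) => b i
      | Sum.inr (Sum.inl _), Sum.inl _ => 0
      | Sum.inr (Sum.inl i), Sum.inr (Sum.inl j) => -A i j
      | Sum.inr (Sum.inl i), Sum.inr (Sum.inr _) => -b i
      | Sum.inr (Sum.inr _), Sum.inl j => b j
      | Sum.inr (Sum.inr _), Sum.inr (Sum.inl j) => -b j
      | Sum.inr (Sum.inr _), Sum.inr (Sum.inr _) => 0)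
    (hH : H.IsHermitian) :
    (Finset.univ.filter fun i => hH.eigenvalues i < 0).card = N ∧
    (Finset.univ.filter fun i => 0 < hH.eigenvalues i).card = N ∧
    (Finset.univ.filter fun i => hH.eigenvalues i = 0).card = 1 := by
  obtain rfl : H = differenceHessian A b := by
    ext (i | i | u) (j | j | v) <;> exact hHdef _ _
  have hsym := hH.card_eigenvalues_neg_eq_card_pos <| by
    rw [← reindex_swapSummands_differenceHessian, charpoly_reindex]
  have hzero : #{i | hH.eigenvalues i = 0} = 1 :=
    hH.card_eigenvalues_eq_zero.trans <|
      finrank_ker_differenceHessian hA (hrank.trans (Fintype.card_fin N).symm)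
  have htotal := card_filter_lt_add_card_filter_gt_add_card_filter_eq hH.eigenvalues 0
  simp only [Fintype.card_sum, Fintype.card_fin, Fintype.card_unit] at htotal
  omega
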